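/- arXiv:2006.15797 — 6 statements merged into one kernel-verified Lean document; each statement's English description precedes it below -/
import Mathlib

section
/- There is an absolute constant c>0 such that the following holds. Let S and S′ be probability spaces with the same underlying set Ω. Let G be a graph with vertex set W⊆Ω such that Pr_S(v)>0 and Pr_{S′}(v)>0 for all v∈W. Suppose ε₀>0 and δ>0 are such that min{Pr_S(W), Pr_{S′}(W)} > 1−ε₀ > 1/2, and such that for every edge uv of G, |log((Pr_{S′}(u)/Pr_{S′}(v)) / (Pr_S(u)/Pr_S(v)))| ≤ δ. Let r<∞ be an upper bound on the diameter of G. Then for every v∈W, |log(Pr_{S′}(v)/Pr_S(v))| ≤ c(rδ+ε₀). -/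
private lemma key_bound {Ω : Type} (pS pS' : Ω → ℝ)
    (h0 : ∀ x, 0 ≤ pS x) (h0' : ∀ x, 0 ≤ pS' x)
    (hS : HasSum pS 1) (hS' : HasSum pS' 1)
    (W : Set Ω) (ε₀ : ℝ) (hε : 0 < ε₀) (hhalf : 1/2 < 1 - ε₀)
    (hW : 1 - ε₀ < ∑' w : W, pS w.1)
    (a : ℝ) (ha : ∀ u : W, Real.exp a * pS u.1 ≤ pS' u.1) :
    a ≤ 2 * ε₀ := by
  have hsub : Summable (fun w : W => pS w.1) := hS.summable.subtype W
  have hsub' : Summable (fun w : W => pS' w.1) := hS'.summable.subtype W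
  have hle1 : (∑' w : W, pS' w.1) ≤ 1 := by
    rw [tsum_subtype]
    calc ∑' x, W.indicator pS' x ≤ ∑' x, pS' x :=
          Summable.tsum_le_tsum (fun x => Set.indicator_le_self' (fun x _ => h0' x) x)
            (hS'.summable.indicator W) hS'.summable
      _ = 1 := hS'.tsum_eq
  have h1 : Real.exp a * (∑' w : W, pS w.1) ≤ ∑' w : W, pS' w.1 := by
    rw [← tsum_mul_left]
    exact Summable.tsum_le_tsum ha (hsub.mul_left _) hsub'
  have h2 : Real.exp a * (1 - ε₀) ≤ 1 := by
    have := mul_le_mul_of_nonneg_left hW.le (Real.exp_pos a).le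
    linarith
  have h3 : Real.exp a ≤ Real.exp (2 * ε₀) := by
    have he := Real.add_one_le_exp (2 * ε₀)
    have hpos : (0 : ℝ) < 1 - ε₀ := by linarith
    have : Real.exp a ≤ 1 / (1 - ε₀) := by
      rw [le_div_iff₀ hpos]; exact h2
    have h4 : 1 / (1 - ε₀) ≤ 1 + 2 * ε₀ := by
      rw [div_le_iff₀ hpos]; nlinarith
    linarith
  exact (Real.exp_le_exp).mp h3

/-- Lemma on comparing two probability spaces via ratios along edges of a graph
on a high-probability set `W` of bounded diameter. -/
theorem stmt_7 :
    ∃ c : ℝ, 0 < c ∧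
      ∀ (Ω : Type) (pS pS' : Ω → ℝ),
        (∀ x, 0 ≤ pS x) → (∀ x, 0 ≤ pS' x) →
        HasSum pS 1 → HasSum pS' 1 →
        ∀ (W : Set Ω) (G : SimpleGraph W),
          (∀ v : W, 0 < pS v.1) → (∀ v : W, 0 < pS' v.1) →
          ∀ ε₀ δ : ℝ, 0 < ε₀ → 0 < δ →
            1/2 < 1 - ε₀ →
            1 - ε₀ < ∑' w : W, pS w.1 →
            1 - ε₀ < ∑' w : W, pS' w.1 →
            (∀ u v : W, G.Adj u v →
              |Real.log ((pS' u.1 / pS' v.1) / (pS u.1 / pS v.1))| ≤ δ) →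
            ∀ r : ℕ,
              (∀ u v : W, G.Reachable u v) →
              (∀ u v : W, G.dist u v ≤ r) →
              ∀ v : W, |Real.log (pS' v.1 / pS v.1)| ≤ c * (r * δ + ε₀) := by
  refine ⟨2, by norm_num, ?_⟩
  intro Ω pS pS' h0 h0' hS hS' W G hpos hpos' ε₀ δ hε hδ hhalf hW hW' hedge r hreach hdist v
  set ρ : W → ℝ := fun u => Real.log (pS' u.1 / pS u.1) with hρ
  -- edge bound in terms of ρ
  have hedgeρ : ∀ u w : W, G.Adj u w → |ρ u - ρ w| ≤ δ := by
    intro u w huw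
    have h := hedge u w huw
    have e : ∀ x : W, ρ x = Real.log (pS' x.1) - Real.log (pS x.1) := fun x =>
      Real.log_div (ne_of_gt (hpos' x)) (ne_of_gt (hpos x))
    have heq : Real.log ((pS' u.1 / pS' w.1) / (pS u.1 / pS w.1)) = ρ u - ρ w := by
      rw [Real.log_div (div_ne_zero (ne_of_gt (hpos' u)) (ne_of_gt (hpos' w)))
            (div_ne_zero (ne_of_gt (hpos u)) (ne_of_gt (hpos w))),
          Real.log_div (ne_of_gt (hpos' u)) (ne_of_gt (hpos' w)),
          Real.log_div (ne_of_gt (hpos u)) (ne_of_gt (hpos w)), e u, e w]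
      ring
    rwa [heq] at h
  -- walk bound
  have hwalk : ∀ (u w : W) (p : G.Walk u w), |ρ u - ρ w| ≤ p.length * δ := by
    intro u w p
    induction p with
    | nil => simp
    | @cons x y z h q ih =>
      simp only [SimpleGraph.Walk.length_cons]
      push_cast
      have h1 := hedgeρ x y h
      have h2 := abs_sub_le (ρ x) (ρ y) (ρ z)
      linarith
  have hρbound : ∀ u w : W, |ρ u - ρ w| ≤ r * δ := by
    intro u w
    obtain ⟨p, hp⟩ := (hreach u w).exists_walk_length_eq_dist
    calc |ρ u - ρ w| ≤ p.length * δ := hwalk u w p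
      _ ≤ r * δ := by
          apply mul_le_mul_of_nonneg_right _ hδ.le
          exact_mod_cast hp ▸ hdist u w
  have hexpρ : ∀ u : W, Real.exp (ρ u) = pS' u.1 / pS u.1 := fun u =>
    Real.exp_log (div_pos (hpos' u) (hpos u))
  -- upper bound
  have hup : ρ v ≤ r * δ + 2 * ε₀ := by
    have := key_bound pS pS' h0 h0' hS hS' W ε₀ hε hhalf hW (ρ v - r * δ) ?_
    · linarith
    · intro u
      have h1 : ρ v - r * δ ≤ ρ u := by
        have := hρbound v u; have := abs_le.mp (hρbound v u); linarith [this.1]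
      have h2 : Real.exp (ρ v - r * δ) ≤ Real.exp (ρ u) := Real.exp_le_exp.mpr h1
      rw [hexpρ u] at h2
      calc Real.exp (ρ v - r * δ) * pS u.1 ≤ (pS' u.1 / pS u.1) * pS u.1 :=
            mul_le_mul_of_nonneg_right h2 (hpos u).le
        _ = pS' u.1 := div_mul_cancel₀ _ (ne_of_gt (hpos u))
  -- lower bound
  have hlo : -(r * δ + 2 * ε₀) ≤ ρ v := by
    have := key_bound pS' pS h0' h0 hS' hS W ε₀ hε hhalf hW' (-ρ v - r * δ) ?_
    · linarith
    · intro u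
      have h1 : -ρ v - r * δ ≤ -ρ u := by
        have := abs_le.mp (hρbound u v); linarith [this.1]
      have h2 : Real.exp (-ρ v - r * δ) ≤ Real.exp (-ρ u) := Real.exp_le_exp.mpr h1
      have h3 : Real.exp (-ρ u) = pS u.1 / pS' u.1 := by
        rw [Real.exp_neg, hexpρ u]
        field_simp
      rw [h3] at h2
      calc Real.exp (-ρ v - r * δ) * pS' u.1 ≤ (pS u.1 / pS' u.1) * pS' u.1 :=
            mul_le_mul_of_nonneg_right h2 (hpos' u).le
        _ = pS u.1 := div_mul_cancel₀ _ (ne_of_gt (hpos' u))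
  have : |ρ v| ≤ r * δ + 2 * ε₀ := abs_le.mpr ⟨by linarith, hup⟩
  have hr : (0:ℝ) ≤ (r:ℝ) * δ := by positivity
  calc |Real.log (pS' v.1 / pS v.1)| = |ρ v| := rfl
    _ ≤ r * δ + 2 * ε₀ := this
    _ ≤ 2 * (r * δ + ε₀) := by linarith
end

section
/- Let A be either A^bi or A^di, and let (s,t) be an A-realisable degree sequence with m=M1(s)=M1(t). Set Δ_S=max_{a∈S}s_a and Δ_T=max_{v∈T}t_v, and suppose 2(Δ_S+1)(Δ_T+1)<m. Then for every av∈A, P_{av}(s,t) ≤ Δ_S·Δ_T / (m·(1−2(Δ_S+1)(Δ_T+1)/m)). -/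
/-!
Switching. For a realisation `E` containing `av`, call an edge `bu ∈ E` switchable when `au`
and `bv` are allowed non-edges of `E`; replacing `av, bu` by `au, bv` gives another realisation
`F`, from which `E` is recovered given `bu`. An edge `bu ∈ E` is not switchable only if `u` is a
neighbour of `a` or forbidden for `a`, or `b` is a neighbour of `v` or forbidden for `v`; as the
forbidden pairs form a matching, this excludes at most `(Δ_S + 1) Δ_T + (Δ_T + 1) Δ_S` edges, so
`E` has at least `m - 2 (Δ_S + 1) (Δ_T + 1)` switchable edges. Conversely `F` arises from at most
`s_a t_v` pairs `(E, bu)`, one for each neighbour `u` of `a` and `b` of `v` in `F`. Double counting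
gives `N_{av} (m - 2 (Δ_S + 1) (Δ_T + 1)) ≤ N s_a t_v`.
-/

/-- `N(s,t)`: the number of bipartite graphs with all edges in the allowable set `A`
realising the degree sequence `(s,t)`. -/
noncomputable def NA (ℓ n : ℕ) (A : Set (Fin ℓ × Fin n)) (s : Fin ℓ → ℕ) (t : Fin n → ℕ) : ℕ :=
  Nat.card {E : Finset (Fin ℓ × Fin n) // ↑E ⊆ A ∧
    (∀ a : Fin ℓ, (E.filter (fun p => p.1 = a)).card = s a) ∧
    (∀ v : Fin n, (E.filter (fun p => p.2 = v)).card = t v)}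

/-- `N_{av}(s,t)`: the number of such graphs containing the edge `(a,v)`. -/
noncomputable def NAe (ℓ n : ℕ) (A : Set (Fin ℓ × Fin n)) (a : Fin ℓ) (v : Fin n)
    (s : Fin ℓ → ℕ) (t : Fin n → ℕ) : ℕ :=
  Nat.card {E : Finset (Fin ℓ × Fin n) // (a, v) ∈ E ∧ ↑E ⊆ A ∧
    (∀ a' : Fin ℓ, (E.filter (fun p => p.1 = a')).card = s a') ∧
    (∀ v' : Fin n, (E.filter (fun p => p.2 = v')).card = t v')}

open Finset

section

variable {α β : Type*}

lemma sum_insert_insert_erase_erase {γ M : Type*} [DecidableEq γ] [AddCommMonoid M]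
    (g : γ → M) {E : Finset γ} {x y x' y' : γ} (hx : x ∈ E) (hy : y ∈ E) (hxy : x ≠ y)
    (hx' : x' ∉ E) (hy' : y' ∉ E) (hxy' : x' ≠ y') (hgx : g x' = g x) (hgy : g y' = g y) :
    ∑ z ∈ insert x' (insert y' ((E.erase x).erase y)), g z = ∑ z ∈ E, g z := by
  have hyx : y ∈ E.erase x := mem_erase.2 ⟨hxy.symm, hy⟩
  rw [sum_insert, sum_insert, hgx, hgy, add_sum_erase _ _ hyx, add_sum_erase _ _ hx]
  · exact fun h => hy' (mem_of_mem_erase (mem_of_mem_erase h))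
  · simp only [mem_insert, mem_erase, not_or]
    exact ⟨hxy', fun h => hx' h.2.2⟩

lemma card_filter_insert_insert_erase_erase {γ δ : Type*} [DecidableEq γ] [DecidableEq δ]
    (f : γ → δ) (d : δ) {E : Finset γ} {x y x' y' : γ} (hx : x ∈ E) (hy : y ∈ E) (hxy : x ≠ y)
    (hx' : x' ∉ E) (hy' : y' ∉ E) (hxy' : x' ≠ y') (hfx : f x' = f x) (hfy : f y' = f y) :
    #((insert x' (insert y' ((E.erase x).erase y))).filter (fun z => f z = d))
      = #(E.filter (fun z => f z = d)) := by
  simp only [card_filter]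
  exact sum_insert_insert_erase_erase _ hx hy hxy hx' hy' hxy' (by rw [hfx]) (by rw [hfy])

lemma card_filter_snd_mem_le [DecidableEq β] {E : Finset (α × β)} {D : ℕ}
    (hE : ∀ u, #(E.filter (fun p => p.2 = u)) ≤ D) (U : Finset β) :
    #(E.filter (fun p => p.2 ∈ U)) ≤ D * #U :=
  card_le_mul_card_image_of_maps_to (f := Prod.snd) (fun _ h => (mem_filter.1 h).2) D
    fun u _ => (card_le_card (by intro p; simp +contextual)).trans (hE u)

lemma card_filter_fst_mem_le [DecidableEq α] {E : Finset (α × β)} {D : ℕ}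
    (hE : ∀ b, #(E.filter (fun p => p.1 = b)) ≤ D) (V : Finset α) :
    #(E.filter (fun p => p.1 ∈ V)) ≤ D * #V :=
  card_le_mul_card_image_of_maps_to (f := Prod.fst) (fun _ h => (mem_filter.1 h).2) D
    fun b _ => (card_le_card (by intro p; simp +contextual)).trans (hE b)

lemma card_filter_mk_left_mem [DecidableEq α] [DecidableEq β] [Fintype β] (E : Finset (α × β))
    (a : α) :
    #{u | (a, u) ∈ E} = #(E.filter (fun p => p.1 = a)) := by
  rw [← card_image_of_injective _ (Prod.mk_right_injective a)]
  congr 1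
  ext ⟨b, u⟩
  aesop

lemma card_filter_mk_right_mem [DecidableEq α] [DecidableEq β] [Fintype α] (E : Finset (α × β))
    (v : β) :
    #{b | (b, v) ∈ E} = #(E.filter (fun p => p.2 = v)) := by
  rw [← card_image_of_injective _ (Prod.mk_left_injective v)]
  congr 1
  ext ⟨b, u⟩
  aesop

section Switching

variable [DecidableEq α] [DecidableEq β]

def IsRealisation (A : Set (α × β)) (s : α → ℕ) (t : β → ℕ) (E : Finset (α × β)) : Prop :=
  ↑E ⊆ A ∧ (∀ a, #(E.filter (fun p => p.1 = a)) = s a) ∧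
    ∀ v, #(E.filter (fun p => p.2 = v)) = t v

def HasMatchingComplement (A : Set (α × β)) : Prop :=
  (∀ a, {u | (a, u) ∉ A}.Subsingleton) ∧ ∀ v, {b | (b, v) ∉ A}.Subsingleton

def switch (a : α) (v : β) (E : Finset (α × β)) (e : α × β) : Finset (α × β) :=
  insert (a, e.2) (insert (e.1, v) ((E.erase (a, v)).erase e))

open Classical in
noncomputable def switchable (A : Set (α × β)) (E : Finset (α × β)) (a : α) (v : β) :
    Finset (α × β) :=
  {e ∈ E | (a, e.2) ∈ A ∧ (a, e.2) ∉ E ∧ (e.1, v) ∈ A ∧ (e.1, v) ∉ E}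

lemma IsRealisation.card_eq [Fintype α] {A : Set (α × β)} {s : α → ℕ} {t : β → ℕ}
    {E : Finset (α × β)} (hE : IsRealisation A s t E) :
    #E = ∑ b, s b := by
  rw [card_eq_sum_card_fiberwise (f := Prod.fst) (t := univ) fun _ _ => mem_univ _]
  exact sum_congr rfl fun b _ => hE.2.1 b

section

variable {A : Set (α × β)} {E : Finset (α × β)} {a : α} {v : β} {e : α × β}

lemma mem_switchable :
    e ∈ switchable A E a v ↔
      e ∈ E ∧ (a, e.2) ∈ A ∧ (a, e.2) ∉ E ∧ (e.1, v) ∈ A ∧ (e.1, v) ∉ E := by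
  simp [switchable]

lemma isRealisation_switch {s : α → ℕ} {t : β → ℕ} (hE : IsRealisation A s t E)
    (hav : (a, v) ∈ E) (he : e ∈ switchable A E a v) :
    IsRealisation A s t (switch a v E e) := by
  obtain ⟨heE, hauA, hauE, hbvA, hbvE⟩ := mem_switchable.1 he
  have hea : e.1 ≠ a := fun h => hauE (by rwa [← h])
  have hne : (a, v) ≠ e := fun h => hea (congrArg Prod.fst h).symm
  have hne' : (a, e.2) ≠ (e.1, v) := fun h => hea (congrArg Prod.fst h).symm
  refine ⟨?_, fun b => ?_, fun u => ?_⟩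
  · intro z hz
    simp only [switch, mem_coe, mem_insert, mem_erase] at hz
    rcases hz with rfl | rfl | ⟨-, -, hz⟩
    exacts [hauA, hbvA, hE.1 hz]
  · rw [switch,
      card_filter_insert_insert_erase_erase _ _ hav heE hne hauE hbvE hne' rfl rfl]
    exact hE.2.1 b
  · rw [switch, erase_right_comm,
      card_filter_insert_insert_erase_erase _ _ heE hav hne.symm hauE hbvE hne' rfl rfl]
    exact hE.2.2 u

lemma insert_insert_erase_erase_switch (hav : (a, v) ∈ E) (he : e ∈ switchable A E a v) :
    insert (a, v) (insert e (((switch a v E e).erase (a, e.2)).erase (e.1, v))) = E := by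
  obtain ⟨heE, -, hauE, -, hbvE⟩ := mem_switchable.1 he
  ext z
  simp only [switch, mem_insert, mem_erase]
  by_cases h1 : z = (a, v) <;> by_cases h2 : z = e <;> by_cases h3 : z = (a, e.2) <;>
    by_cases h4 : z = (e.1, v) <;> simp_all

end

variable [Fintype α] [Fintype β] {A : Set (α × β)} {s : α → ℕ} {t : β → ℕ} {Ds Dt : ℕ}

open Classical in
lemma card_le_card_switchable_add (hA : HasMatchingComplement A) (hs : ∀ b, s b ≤ Ds)
    (ht : ∀ u, t u ≤ Dt) {E : Finset (α × β)} (hE : IsRealisation A s t E) (a : α) (v : β) :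
    #E ≤ #(switchable A E a v) + 2 * (Ds + 1) * (Dt + 1) := by
  set U : Finset β := {u | (a, u) ∈ E ∨ (a, u) ∉ A}
  set V : Finset α := {b | (b, v) ∈ E ∨ (b, v) ∉ A}
  have hU : #U ≤ Ds + 1 := by
    refine (card_le_card (filter_or _ _ _).le).trans <|
      (card_union_le _ _).trans (add_le_add ?_ ?_)
    · rw [card_filter_mk_left_mem, hE.2.1]
      exact hs a
    · exact card_le_one.2 fun x hx y hy => hA.1 a (by simpa using hx) (by simpa using hy)
  have hV : #V ≤ Dt + 1 := by
    refine (card_le_card (filter_or _ _ _).le).trans <|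
      (card_union_le _ _).trans (add_le_add ?_ ?_)
    · rw [card_filter_mk_right_mem, hE.2.2]
      exact ht v
    · exact card_le_one.2 fun x hx y hy => hA.2 v (by simpa using hx) (by simpa using hy)
  have hcover : E ⊆ switchable A E a v ∪ E.filter (fun p => p.2 ∈ U) ∪
      E.filter (fun p => p.1 ∈ V) := by
    intro e he
    simp only [mem_union, mem_filter, mem_switchable, U, V, mem_univ, true_and, he]
    tauto
  calc #E ≤ #(switchable A E a v) + #(E.filter (fun p => p.2 ∈ U)) +
        #(E.filter (fun p => p.1 ∈ V)) := by
        have := card_union_le (switchable A E a v) (E.filter (fun p => p.2 ∈ U))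
        have := card_union_le (switchable A E a v ∪ E.filter (fun p => p.2 ∈ U))
          (E.filter (fun p => p.1 ∈ V))
        have := card_le_card hcover
        omega
    _ ≤ #(switchable A E a v) + Dt * (Ds + 1) + Ds * (Dt + 1) := by
        gcongr
        · exact (card_filter_snd_mem_le (fun u => (hE.2.2 u).trans_le (ht u)) U).trans
            (Nat.mul_le_mul_left _ hU)
        · exact (card_filter_fst_mem_le (fun b => (hE.2.1 b).trans_le (hs b)) V).trans
            (Nat.mul_le_mul_left _ hV)
    _ ≤ #(switchable A E a v) + 2 * (Ds + 1) * (Dt + 1) := by nlinarith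

open Classical in
theorem card_filter_mem_isRealisation_mul_le (hA : HasMatchingComplement A)
    (hs : ∀ b, s b ≤ Ds) (ht : ∀ u, t u ≤ Dt) (a : α) (v : β) :
    #{E | (a, v) ∈ E ∧ IsRealisation A s t E} * (∑ b, s b - 2 * (Ds + 1) * (Dt + 1))
      ≤ #{E | IsRealisation A s t E} * (s a * t v) := by
  set G : Finset (Finset (α × β)) := {E | IsRealisation A s t E}
  set Gav : Finset (Finset (α × β)) := {E | (a, v) ∈ E ∧ IsRealisation A s t E}
  calc #Gav * (∑ b, s b - 2 * (Ds + 1) * (Dt + 1))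
      ≤ ∑ E ∈ Gav, #(switchable A E a v) := by
        rw [← smul_eq_mul]
        refine card_nsmul_le_sum _ _ _ fun E hE => ?_
        have hE := (mem_filter.1 hE).2.2
        have := card_le_card_switchable_add hA hs ht hE a v
        rw [hE.card_eq] at this
        omega
    _ = #(Gav.sigma fun E => switchable A E a v) := (card_sigma _ _).symm
    _ ≤ #(G.sigma fun F => ({b | (b, v) ∈ F} : Finset α) ×ˢ ({u | (a, u) ∈ F} : Finset β)) := by
        refine card_le_card_of_injOn (fun p => ⟨switch a v p.1 p.2, p.2⟩) ?_ ?_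
        · rintro ⟨E, e⟩ h
          simp only [coe_sigma, Set.mem_sigma_iff, mem_coe, mem_filter, mem_univ, true_and,
            Gav] at h
          simp only [coe_sigma, Set.mem_sigma_iff, mem_coe, mem_filter, mem_univ, true_and,
            mem_product, G, switch, mem_insert, true_or, or_true]
          exact ⟨isRealisation_switch h.1.2 h.1.1 h.2, trivial⟩
        · rintro ⟨E₁, e⟩ h₁ ⟨E₂, e'⟩ h₂ h
          simp only [Sigma.mk.injEq, heq_eq_eq] at h
          obtain ⟨hsw, rfl⟩ := h
          simp only [coe_sigma, Set.mem_sigma_iff, mem_coe, mem_filter, mem_univ, true_and,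
            Gav] at h₁ h₂
          rw [← insert_insert_erase_erase_switch h₁.1.1 h₁.2, hsw,
            insert_insert_erase_erase_switch h₂.1.1 h₂.2]
    _ = #G * (s a * t v) := by
        rw [card_sigma]
        refine sum_const_nat fun F hF => ?_
        have hF := (mem_filter.1 hF).2
        rw [card_product, card_filter_mk_right_mem, card_filter_mk_left_mem, hF.2.1, hF.2.2,
          mul_comm]

end Switching

end

lemma hasMatchingComplement_univ {α β : Type*} :
    HasMatchingComplement (Set.univ : Set (α × β)) :=
  ⟨fun _ _ hx => (hx trivial).elim, fun _ _ hx => (hx trivial).elim⟩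

lemma hasMatchingComplement_val_ne {ℓ n : ℕ} :
    HasMatchingComplement {p : Fin ℓ × Fin n | (p.1 : ℕ) ≠ p.2} := by
  refine ⟨fun a u hu u' hu' => Fin.ext ?_, fun v b hb b' hb' => Fin.ext ?_⟩ <;>
    simp_all

open Classical in
lemma NA_eq_card (ℓ n : ℕ) (A : Set (Fin ℓ × Fin n)) (s : Fin ℓ → ℕ) (t : Fin n → ℕ) :
    NA ℓ n A s t = #{E | IsRealisation A s t E} := by
  rw [NA, Nat.card_eq_fintype_card, Fintype.card_subtype]
  congr

open Classical in
lemma NAe_eq_card (ℓ n : ℕ) (A : Set (Fin ℓ × Fin n)) (a : Fin ℓ) (v : Fin n)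
    (s : Fin ℓ → ℕ) (t : Fin n → ℕ) :
    NAe ℓ n A a v s t = #{E | (a, v) ∈ E ∧ IsRealisation A s t E} := by
  rw [NAe, Nat.card_eq_fintype_card, Fintype.card_subtype]
  congr

theorem stmt_9_general (ℓ n : ℕ) (A : Set (Fin ℓ × Fin n))
    (hA : A = Set.univ ∨
      ∃ _h : ℓ = n, A = {p : Fin ℓ × Fin n | (p.1 : ℕ) ≠ (p.2 : ℕ)})
    (s : Fin ℓ → ℕ) (t : Fin n → ℕ) (m : ℕ)
    (hms : ∑ a, s a = m)
    (hreal : 0 < NA ℓ n A s t)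
    (hmbig : 2 * (Finset.univ.sup s + 1) * (Finset.univ.sup t + 1) < m) :
    ∀ (a : Fin ℓ) (v : Fin n), (a, v) ∈ A →
      (NAe ℓ n A a v s t : ℝ) / (NA ℓ n A s t : ℝ) ≤
        ((Finset.univ.sup s : ℕ) : ℝ) * ((Finset.univ.sup t : ℕ) : ℝ) /
          ((m : ℝ) * (1 - 2 * (((Finset.univ.sup s : ℕ) : ℝ) + 1) *
            (((Finset.univ.sup t : ℕ) : ℝ) + 1) / (m : ℝ))) := by
  intro a v _
  set Ds := univ.sup s
  set Dt := univ.sup t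
  have hA' : HasMatchingComplement A := by
    rcases hA with rfl | ⟨-, rfl⟩
    exacts [hasMatchingComplement_univ, hasMatchingComplement_val_ne]
  have hcount : NAe ℓ n A a v s t * (m - 2 * (Ds + 1) * (Dt + 1)) ≤ Ds * Dt * NA ℓ n A s t := by
    rw [NAe_eq_card, NA_eq_card, ← hms, mul_comm (Ds * Dt)]
    refine (card_filter_mem_isRealisation_mul_le hA' (fun b => le_sup (mem_univ b))
      (fun u => le_sup (mem_univ u)) a v).trans ?_
    gcongr <;> exact le_sup (mem_univ _)
  have hden : (m : ℝ) * (1 - 2 * ((Ds : ℝ) + 1) * ((Dt : ℝ) + 1) / m)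
      = ((m - 2 * (Ds + 1) * (Dt + 1) : ℕ) : ℝ) := by
    have hm : (m : ℝ) ≠ 0 := by exact_mod_cast (pos_of_gt hmbig).ne'
    rw [Nat.cast_sub hmbig.le]
    push_cast
    field_simp
  rw [hden, div_le_div_iff₀ (by exact_mod_cast hreal)
    (by exact_mod_cast Nat.sub_pos_of_lt hmbig)]
  exact_mod_cast hcount

/-- Switching upper bound for the edge probability `P_{av}(s,t)` (Lemma 2.4),
where `A` is either `A^bi` or `A^di`. -/
theorem stmt_9 (ℓ n : ℕ) (hℓ : 0 < ℓ) (hn : 0 < n) (A : Set (Fin ℓ × Fin n))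
    (hA : A = Set.univ ∨
      ∃ _h : ℓ = n, A = {p : Fin ℓ × Fin n | (p.1 : ℕ) ≠ (p.2 : ℕ)})
    (s : Fin ℓ → ℕ) (t : Fin n → ℕ) (m : ℕ)
    (hms : ∑ a, s a = m) (hmt : ∑ v, t v = m)
    (hreal : 0 < NA ℓ n A s t)
    (hmbig : 2 * (Finset.univ.sup s + 1) * (Finset.univ.sup t + 1) < m) :
    ∀ (a : Fin ℓ) (v : Fin n), (a, v) ∈ A →
      (NAe ℓ n A a v s t : ℝ) / (NA ℓ n A s t : ℝ) ≤
        ((Finset.univ.sup s : ℕ) : ℝ) * ((Finset.univ.sup t : ℕ) : ℝ) /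
          ((m : ℝ) * (1 - 2 * (((Finset.univ.sup s : ℕ) : ℝ) + 1) *
            (((Finset.univ.sup t : ℕ) : ℝ) + 1) / (m : ℝ))) :=
  stmt_9_general ℓ n A hA s t m hms hreal hmbig
end

section
/- Let ℓ,n be positive integers and let r_i≥0 (1≤i≤ℓ), c_j≥0 (1≤j≤n), m_{ij}≥0 (1≤i≤ℓ, 1≤j≤n) be integers such that ∑_{1≤i≤ℓ} r_i = ∑_{1≤j≤n} c_j. Then there exists an ℓ×n integer matrix B=(b_{ij}) with row sums r_1,…,r_ℓ and column sums c_1,…,c_n such that 0≤b_{ij}≤m_{ij} for all i,j, if and only if for all X⊆{1,…,ℓ} and Y⊆{1,…,n}: ∑_{i∈X, j∈Y} m_{ij} ≥ ∑_{i∈X} r_i − ∑_{j∉Y} c_j. -/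
/-!
Necessity: the row sums over `X` are carried by the cells `X × Y`, bounded by `m`, and by the
columns outside `Y`. Sufficiency, by induction on the total `∑ r`: the slack of the cut
condition is submodular, so the tight cuts are closed under `(X, Y) ↦ (X₁ ∪ X₂, Y₁ ∩ Y₂)`.
Hence for a row `i` with `r i ≠ 0` some cell `(i, j)` with `m i j ≠ 0` lies on no tight cut
avoiding it (otherwise combining these cuts and adding row `i` gives a violated one), and
removing one unit from `r i`, `c j` and `m i j` preserves the cut condition.
-/

open Finset

lemma Pi.exists_eq_add_single {α : Type*} [DecidableEq α] {β : α → Type*}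
    [∀ a, AddZeroClass (β a)] {f : ∀ a, β a} {a : α} {x y : β a} (h : f a = y + x) :
    ∃ g, f = g + Pi.single a x :=
  ⟨Function.update f a y, by ext b; rcases eq_or_ne b a with rfl | hb <;> simp [*]⟩

lemma sum_sum_union_inter_le {ι κ M : Type*} [DecidableEq ι] [DecidableEq κ]
    [AddCommMonoid M] [PartialOrder M] [IsOrderedAddMonoid M] (f : ι → κ → M)
    (hf : ∀ i j, 0 ≤ f i j) (X₁ X₂ : Finset ι) (Y₁ Y₂ : Finset κ) :
    ∑ i ∈ X₁ ∪ X₂, ∑ j ∈ Y₁ ∩ Y₂, f i j + ∑ i ∈ X₁ ∩ X₂, ∑ j ∈ Y₁ ∪ Y₂, f i j ≤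
      ∑ i ∈ X₁, ∑ j ∈ Y₁, f i j + ∑ i ∈ X₂, ∑ j ∈ Y₂, f i j := by
  simp only [← sum_product']
  rw [← sum_union_inter, ← sum_union_inter (s₁ := X₁ ×ˢ Y₁), product_inter_product,
    product_inter_product, inter_eq_right.2 inter_subset_union,
    inter_eq_left.2 inter_subset_union]
  refine add_le_add (sum_le_sum_of_subset_of_nonneg ?_ fun (p : ι × κ) _ _ => hf p.1 p.2) le_rfl
  rintro ⟨i, j⟩
  simp only [mem_union, mem_product, mem_inter]
  tauto

section CutSlack

variable {ι κ : Type*} [Fintype κ] [DecidableEq κ]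

def cutSlack (r : ι → ℕ) (c : κ → ℕ) (m : ι → κ → ℕ) (X : Finset ι) (Y : Finset κ) : ℤ :=
  ∑ i ∈ X, ∑ j ∈ Y, (m i j : ℤ) + ∑ j ∈ Yᶜ, (c j : ℤ) - ∑ i ∈ X, (r i : ℤ)

variable {r : ι → ℕ} {c : κ → ℕ} {m : ι → κ → ℕ}

lemma cutSlack_nonneg_of_margins [Fintype ι] {B : ι → κ → ℕ} (hBm : ∀ i j, B i j ≤ m i j)
    (hrow : ∀ i, ∑ j, B i j = r i) (hcol : ∀ j, ∑ i, B i j = c j) (X : Finset ι)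
    (Y : Finset κ) : 0 ≤ cutSlack r c m X Y := by
  have key : ∑ i ∈ X, r i ≤ ∑ i ∈ X, ∑ j ∈ Y, m i j + ∑ j ∈ Yᶜ, c j :=
    calc ∑ i ∈ X, r i = ∑ i ∈ X, ∑ j ∈ Y, B i j + ∑ j ∈ Yᶜ, ∑ i ∈ X, B i j := by
          rw [sum_comm (s := Yᶜ), ← sum_add_distrib]
          exact sum_congr rfl fun i _ => by rw [sum_add_sum_compl, hrow]
      _ ≤ _ := add_le_add (sum_le_sum fun i _ => sum_le_sum fun j _ => hBm i j)
          (sum_le_sum fun j _ => hcol j ▸ sum_le_sum_of_subset (subset_univ X))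
  rw [cutSlack, sub_nonneg]
  exact_mod_cast key

lemma cutSlack_union_inter_le [DecidableEq ι] (X₁ X₂ : Finset ι) (Y₁ Y₂ : Finset κ) :
    cutSlack r c m (X₁ ∪ X₂) (Y₁ ∩ Y₂) + cutSlack r c m (X₁ ∩ X₂) (Y₁ ∪ Y₂) ≤
      cutSlack r c m X₁ Y₁ + cutSlack r c m X₂ Y₂ := by
  have hm := sum_sum_union_inter_le (fun i j => (m i j : ℤ)) (fun _ _ => by positivity)
    X₁ X₂ Y₁ Y₂
  have hr := sum_union_inter (s₁ := X₁) (s₂ := X₂) (f := fun i => (r i : ℤ))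
  have hc : ∑ j ∈ (Y₁ ∩ Y₂)ᶜ, (c j : ℤ) + ∑ j ∈ (Y₁ ∪ Y₂)ᶜ, (c j : ℤ) =
      ∑ j ∈ Y₁ᶜ, (c j : ℤ) + ∑ j ∈ Y₂ᶜ, (c j : ℤ) := by
    rw [compl_inter, compl_union]
    exact sum_union_inter
  simp only [cutSlack]
  linarith

lemma cutSlack_insert [DecidableEq ι] {i : ι} {X : Finset ι} (hi : i ∉ X) (Y : Finset κ) :
    cutSlack r c m (insert i X) Y = cutSlack r c m X Y + ∑ j ∈ Y, (m i j : ℤ) - r i := by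
  simp only [cutSlack, sum_insert hi]
  ring

lemma cutSlack_add_single [DecidableEq ι] (i : ι) (j : κ) (X : Finset ι) (Y : Finset κ) :
    cutSlack (r + Pi.single i 1) (c + Pi.single j 1) (m + Pi.single i (Pi.single j 1)) X Y =
      cutSlack r c m X Y + if i ∉ X ∧ j ∉ Y then 1 else 0 := by
  simp only [cutSlack, Pi.add_apply, Nat.cast_add, sum_add_distrib, Pi.single_apply, ite_apply,
    Pi.zero_apply, Nat.cast_ite, Nat.cast_one, Nat.cast_zero, sum_ite_irrel, sum_ite_eq',
    sum_const_zero, mem_compl, ite_not, ite_and]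
  split_ifs <;> ring

lemma exists_tight_cut_disjoint [DecidableEq ι] (hcut : ∀ X Y, 0 ≤ cutSlack r c m X Y)
    (i : ι) (S : Finset κ)
    (hS : ∀ j ∈ S, ∃ X Y, i ∉ X ∧ j ∉ Y ∧ cutSlack r c m X Y ≤ 0) :
    ∃ X Y, i ∉ X ∧ Disjoint Y S ∧ cutSlack r c m X Y ≤ 0 := by
  induction S using Finset.induction_on with
  | empty => exact ⟨∅, univ, notMem_empty i, disjoint_empty_right _, by simp [cutSlack]⟩
  | insert j S hj ih =>
    obtain ⟨X₁, Y₁, hi₁, hY₁, h₁⟩ := ih fun j' hj' => hS j' (mem_insert_of_mem hj')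
    obtain ⟨X₂, Y₂, hi₂, hj₂, h₂⟩ := hS j (mem_insert_self j S)
    refine ⟨X₁ ∪ X₂, Y₁ ∩ Y₂, by simp [hi₁, hi₂], ?_, ?_⟩
    · rw [disjoint_insert_right]
      exact ⟨fun h => hj₂ (mem_inter.1 h).2, hY₁.mono_left inter_subset_left⟩
    · have := cutSlack_union_inter_le (r := r) (c := c) (m := m) X₁ X₂ Y₁ Y₂
      have := hcut (X₁ ∩ X₂) (Y₁ ∪ Y₂)
      linarith

lemma exists_column_cutSlack_pos [DecidableEq ι] (hcut : ∀ X Y, 0 ≤ cutSlack r c m X Y)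
    {i : ι} (hi : r i ≠ 0) :
    ∃ j, m i j ≠ 0 ∧ ∀ X Y, i ∉ X → j ∉ Y → 0 < cutSlack r c m X Y := by
  by_contra! h
  obtain ⟨X, Y, hiX, hY, hXY⟩ := exists_tight_cut_disjoint hcut i {j | m i j ≠ 0}
    (by simpa using h)
  have hmY : ∑ j ∈ Y, (m i j : ℤ) = 0 :=
    sum_eq_zero fun j hj => by simpa using disjoint_left.1 hY hj
  have := hcut (insert i X) Y
  rw [cutSlack_insert hiX, hmY] at this
  omega

lemma exists_eq_add_single_of_cutSlack_nonneg [DecidableEq ι]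
    (hcut : ∀ X Y, 0 ≤ cutSlack r c m X Y) {i : ι} (hi : r i ≠ 0) :
    ∃ j r' c' m', r = r' + Pi.single i 1 ∧ c = c' + Pi.single j 1 ∧
      m = m' + Pi.single i (Pi.single j 1) ∧ ∀ X Y, 0 ≤ cutSlack r' c' m' X Y := by
  obtain ⟨j, hmij, hpos⟩ := exists_column_cutSlack_pos hcut hi
  have hcj : 0 < c j := by
    simpa [cutSlack, compl_erase] using
      hpos ∅ (univ.erase j) (notMem_empty i) (notMem_erase j univ)
  obtain ⟨r', rfl⟩ := Pi.exists_eq_add_single (by omega : r i = (r i - 1) + 1)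
  obtain ⟨c', rfl⟩ := Pi.exists_eq_add_single (by omega : c j = (c j - 1) + 1)
  obtain ⟨g, hg⟩ := Pi.exists_eq_add_single (by omega : m i j = (m i j - 1) + 1)
  obtain ⟨m', rfl⟩ := Pi.exists_eq_add_single hg
  refine ⟨j, r', c', m', rfl, rfl, rfl, fun X Y => ?_⟩
  have h := hcut X Y
  have hp := hpos X Y
  rw [cutSlack_add_single] at h hp
  split_ifs at h hp with hXY
  · exact Int.lt_add_one_iff.mp (hp hXY.1 hXY.2)
  · simpa using h

end CutSlack

theorem exists_margins_of_cutSlack_nonneg {ι κ : Type*} [Fintype ι] [DecidableEq ι]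
    [Fintype κ] [DecidableEq κ] (r : ι → ℕ) (c : κ → ℕ) (m : ι → κ → ℕ)
    (hsum : ∑ i, r i = ∑ j, c j) (hcut : ∀ X Y, 0 ≤ cutSlack r c m X Y) :
    ∃ B : ι → κ → ℕ, (∀ i j, B i j ≤ m i j) ∧ (∀ i, ∑ j, B i j = r i) ∧
      (∀ j, ∑ i, B i j = c j) := by
  obtain ⟨N, hN⟩ : ∃ N, ∑ i, r i = N := ⟨_, rfl⟩
  induction N generalizing r c m with
  | zero =>
    have hr : r = 0 := funext fun i => sum_eq_zero_iff.1 hN i (mem_univ i)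
    have hc : c = 0 := funext fun j => sum_eq_zero_iff.1 (hsum ▸ hN) j (mem_univ j)
    subst hr hc
    exact ⟨0, fun _ _ => Nat.zero_le _, by simp, by simp⟩
  | succ N ih =>
    obtain ⟨i, -, hi⟩ := exists_ne_zero_of_sum_ne_zero (hN.trans_ne N.succ_ne_zero)
    obtain ⟨j, r', c', m', rfl, rfl, rfl, hcut'⟩ :=
      exists_eq_add_single_of_cutSlack_nonneg hcut hi
    have hN' : ∑ k, r' k = N := by simpa [sum_add_distrib] using hN
    have hsum' : ∑ k, r' k = ∑ l, c' l := by simpa [sum_add_distrib] using hsum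
    obtain ⟨B, hBm, hrow, hcol⟩ := ih r' c' m' hsum' hcut' hN'
    refine ⟨B + Pi.single i (Pi.single j 1), fun k l => ?_, fun k => ?_, fun l => ?_⟩
    · exact Nat.add_le_add_right (hBm k l) _
    · simp [sum_add_distrib, hrow, Pi.single_apply, ite_apply]
    · simp [sum_add_distrib, hcol, Pi.single_apply, ite_apply]

theorem stmt_10_general (ℓ n : ℕ)
    (r : Fin ℓ → ℕ) (c : Fin n → ℕ) (m : Fin ℓ → Fin n → ℕ)
    (hsum : ∑ i, r i = ∑ j, c j) :
    (∃ B : Fin ℓ → Fin n → ℕ,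
        (∀ i j, B i j ≤ m i j) ∧
        (∀ i, ∑ j, B i j = r i) ∧
        (∀ j, ∑ i, B i j = c j)) ↔
      ∀ (X : Finset (Fin ℓ)) (Y : Finset (Fin n)),
        (∑ i ∈ X, ∑ j ∈ Y, (m i j : ℤ)) ≥
          (∑ i ∈ X, (r i : ℤ)) - ∑ j ∈ Yᶜ, (c j : ℤ) := by
  have hslack : ∀ X Y, 0 ≤ cutSlack r c m X Y ↔
      ∑ i ∈ X, ∑ j ∈ Y, (m i j : ℤ) ≥ ∑ i ∈ X, (r i : ℤ) - ∑ j ∈ Yᶜ, (c j : ℤ) := fun X Y => by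
    rw [cutSlack, sub_nonneg, ge_iff_le, sub_le_iff_le_add]
  simp only [← hslack]
  constructor
  · rintro ⟨B, hBm, hrow, hcol⟩
    exact cutSlack_nonneg_of_margins hBm hrow hcol
  · exact exists_margins_of_cutSlack_nonneg r c m hsum

/-- **Mirsky's theorem** (corollary for exact row and column sums):
existence of a nonnegative integer matrix with prescribed row sums `r`,
column sums `c`, and entrywise upper bounds `m`. -/
theorem stmt_10 (ℓ n : ℕ) (hℓ : 0 < ℓ) (hn : 0 < n)
    (r : Fin ℓ → ℕ) (c : Fin n → ℕ) (m : Fin ℓ → Fin n → ℕ)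
    (hsum : ∑ i, r i = ∑ j, c j) :
    (∃ B : Fin ℓ → Fin n → ℕ,
        (∀ i j, B i j ≤ m i j) ∧
        (∀ i, ∑ j, B i j = r i) ∧
        (∀ j, ∑ i, B i j = c j)) ↔
      ∀ (X : Finset (Fin ℓ)) (Y : Finset (Fin n)),
        (∑ i ∈ X, ∑ j ∈ Y, (m i j : ℤ)) ≥
          (∑ i ∈ X, (r i : ℤ)) - ∑ j ∈ Yᶜ, (c j : ℤ) :=
  stmt_10_general ℓ n r c m hsum
end

section
/- For every constant C≥1 there exists n₀ such that the following holds whenever ℓ,n≥n₀. Let s_a≥1 (a∈S) and t_v≥1 (v∈T) be integers with m := ∑_{a∈S}s_a = ∑_{v∈T}t_v, and let F⊆{av: a∈S, v∈T} be a set of forbidden pairs such that no element of S∪T lies in more than C pairs of F. Set Δ_S=max_{a∈S}s_a, Δ_T=max_{v∈T}t_v, s̄=m/ℓ and t̄=m/n. If m ≤ ℓn/9, Δ_S ≤ 2s̄ and Δ_T ≤ 2t̄, then there exists a simple bipartite graph with bipartition (S,T) in which every a∈S has degree s_a and every v∈T has degree t_v, and which contains no edge in F. -/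
/-!
Pairing up the stubs of the two degree sequences in any order gives a bipartite multigraph with
the prescribed degrees. A bad edge `av` (repeated, or in `F`) is removed by the switch
`av, a'v' ↦ av', a'v`: the edges `a'v'` that cannot serve are those with `v'` adjacent or forbidden
to `a`, or `a'` adjacent or forbidden to `v`, and there are at most
`(Δ_S + C) Δ_T + (Δ_T + C) Δ_S < m` of them. Every switch increases the number of distinct allowed
edges, so after finitely many switches the multigraph is a simple graph avoiding `F`. The density
assumptions give `2 Δ_S Δ_T + C (Δ_S + Δ_T) < m` as soon as `ℓ, n ≥ 72 C`.
-/

namespace Multiset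

variable {α β γ : Type*}

theorem exists_map_fst_eq_map_snd_eq (A : Multiset α) (B : Multiset β) (h : card A = card B) :
    ∃ M : Multiset (α × β), M.map Prod.fst = A ∧ M.map Prod.snd = B := by
  have hlen : A.toList.length = B.toList.length := by simpa using h
  refine ⟨A.toList.zip B.toList, ?_, ?_⟩
  · rw [map_coe, List.map_fst_zip hlen.le, coe_toList]
  · rw [map_coe, List.map_snd_zip hlen.ge, coe_toList]

theorem card_filter_mem_le [DecidableEq β] (M : Multiset γ) (f : γ → β) (N : Finset β) {Δ : ℕ}
    (hΔ : ∀ b, (M.map f).count b ≤ Δ) : card (M.filter (f · ∈ N)) ≤ N.card * Δ := by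
  have hN : ∀ b ∈ (M.filter (f · ∈ N)).map f, b ∈ N := by
    simp only [mem_map, mem_filter]
    rintro _ ⟨x, ⟨-, hx⟩, rfl⟩
    exact hx
  calc card (M.filter (f · ∈ N))
      = ∑ b ∈ N, ((M.filter (f · ∈ N)).map f).count b := by rw [sum_count_eq_card hN, card_map]
    _ ≤ ∑ _b ∈ N, Δ := Finset.sum_le_sum fun b _ =>
        (count_le_of_le b (map_le_map (filter_le _ M))).trans (hΔ b)
    _ = N.card * Δ := by rw [Finset.sum_const, smul_eq_mul]

theorem card_filter_toFinset_union_le [DecidableEq α] [DecidableEq γ] (M : Multiset γ)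
    (F : Finset γ) (f : γ → α) (a : α) :
    ((M.toFinset ∪ F).filter (f · = a)).card ≤ (M.map f).count a + (F.filter (f · = a)).card := by
  rw [Finset.filter_union, count_map, ← toFinset_filter]
  refine (Finset.card_union_le _ _).trans (Nat.add_le_add_right ((toFinset_card_le _).trans ?_) _)
  simp only [eq_comm, le_refl]

theorem count_sum_replicate {ι : Type*} [Fintype ι] [DecidableEq ι] (s : ι → ℕ) (i : ι) :
    (∑ j, replicate (s j) j).count i = s i := by
  simp [count_sum', count_replicate]

theorem card_sum_replicate {ι : Type*} [Fintype ι] (s : ι → ℕ) :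
    card (∑ j, replicate (s j) j) = ∑ j, s j := by
  simp [card_sum]

end Multiset

theorem Finset.card_filter_eq_count_map {γ α : Type*} [DecidableEq α] (E : Finset γ) (f : γ → α)
    (a : α) : (E.filter (f · = a)).card = (E.val.map f).count a := by
  simp only [Multiset.count_map, eq_comm, Finset.card_def, Finset.filter_val]

section Switching

variable {α β : Type*} [DecidableEq α] [DecidableEq β] {F : Finset (α × β)} {ΔS ΔT C : ℕ}

theorem exists_switch_partner {M : Multiset (α × β)}
    (hS : ∀ a, (M.map Prod.fst).count a ≤ ΔS) (hT : ∀ v, (M.map Prod.snd).count v ≤ ΔT)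
    (hFS : ∀ a, (F.filter (·.1 = a)).card ≤ C) (hFT : ∀ v, (F.filter (·.2 = v)).card ≤ C)
    (hM : 2 * ΔS * ΔT + C * (ΔS + ΔT) < Multiset.card M) (a : α) (v : β) :
    ∃ a' v', (a', v') ∈ M ∧ (a, v') ∉ M.toFinset ∪ F ∧ (a', v) ∉ M.toFinset ∪ F := by
  set G := M.toFinset ∪ F
  set N₁ := (G.filter (·.1 = a)).image Prod.snd
  set N₂ := (G.filter (·.2 = v)).image Prod.fst
  have hN₁ : N₁.card ≤ ΔS + C := Finset.card_image_le.trans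
    ((M.card_filter_toFinset_union_le F Prod.fst a).trans (add_le_add (hS a) (hFS a)))
  have hN₂ : N₂.card ≤ ΔT + C := Finset.card_image_le.trans
    ((M.card_filter_toFinset_union_le F Prod.snd v).trans (add_le_add (hT v) (hFT v)))
  have hcover : Multiset.card (M.filter (·.2 ∈ N₁)) + Multiset.card (M.filter (·.1 ∈ N₂))
      < Multiset.card M := by
    have h₁ := (M.card_filter_mem_le Prod.snd N₁ hT).trans (Nat.mul_le_mul_right ΔT hN₁)
    have h₂ := (M.card_filter_mem_le Prod.fst N₂ hS).trans (Nat.mul_le_mul_right ΔS hN₂)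
    nlinarith
  obtain ⟨⟨a', v'⟩, he, hv', ha'⟩ : ∃ e ∈ M, e.2 ∉ N₁ ∧ e.1 ∉ N₂ := by
    by_contra! h
    have hall : M.filter (fun e => e.2 ∈ N₁ ∨ e.1 ∈ N₂) = M :=
      Multiset.filter_eq_self.2 fun e he => or_iff_not_imp_left.2 (h e he)
    have := congrArg Multiset.card (Multiset.filter_add_filter (·.2 ∈ N₁) (·.1 ∈ N₂) M)
    simp only [Multiset.card_add, hall] at this
    omega
  exact ⟨a', v', he, fun h => hv' (Finset.mem_image.2 ⟨_, Finset.mem_filter.2 ⟨h, rfl⟩, rfl⟩),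
    fun h => ha' (Finset.mem_image.2 ⟨_, Finset.mem_filter.2 ⟨h, rfl⟩, rfl⟩)⟩

theorem exists_switch {M : Multiset (α × β)}
    (hS : ∀ a, (M.map Prod.fst).count a ≤ ΔS) (hT : ∀ v, (M.map Prod.snd).count v ≤ ΔT)
    (hFS : ∀ a, (F.filter (·.1 = a)).card ≤ C) (hFT : ∀ v, (F.filter (·.2 = v)).card ≤ C)
    (hM : 2 * ΔS * ΔT + C * (ΔS + ΔT) < Multiset.card M)
    (hbad : ¬ (M.Nodup ∧ Disjoint M.toFinset F)) :
    ∃ M' : Multiset (α × β), M'.map Prod.fst = M.map Prod.fst ∧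
      M'.map Prod.snd = M.map Prod.snd ∧ (M.toFinset \ F).card < (M'.toFinset \ F).card := by
  obtain ⟨⟨a, v⟩, hav, hav_bad⟩ : ∃ e ∈ M, e ∈ F ∨ 1 < M.count e := by
    rw [not_and_or, Multiset.nodup_iff_count_le_one, Finset.not_disjoint_iff] at hbad
    rcases hbad with h | ⟨e, he, heF⟩
    · obtain ⟨e, he⟩ := not_forall.1 h
      rw [not_le] at he
      exact ⟨e, Multiset.count_pos.1 (by omega), Or.inr he⟩
    · exact ⟨e, Multiset.mem_toFinset.1 he, Or.inl heF⟩
  obtain ⟨a', v', he, hav', ha'v⟩ := exists_switch_partner hS hT hFS hFT hM a v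
  simp only [Finset.mem_union, Multiset.mem_toFinset, not_or] at hav' ha'v
  have ha : a' ≠ a := by rintro rfl; exact hav'.1 he
  have hne : (a', v') ≠ (a, v) := fun h => ha (congrArg Prod.fst h)
  set R := (M.erase (a, v)).erase (a', v')
  have hMR : M = (a, v) ::ₘ (a', v') ::ₘ R := by
    rw [Multiset.cons_erase (Multiset.mem_erase_of_ne hne |>.2 he), Multiset.cons_erase hav]
  refine ⟨(a, v') ::ₘ (a', v) ::ₘ R, ?_, ?_, ?_⟩
  · rw [hMR]; simp only [Multiset.map_cons]
  · rw [hMR]; simp only [Multiset.map_cons, Multiset.cons_swap v' v]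
  · set K := M.toFinset \ F
    have hsub : insert (a, v') (insert (a', v) (K.erase (a', v'))) ⊆
        ((a, v') ::ₘ (a', v) ::ₘ R).toFinset \ F := by
      intro x hx
      simp only [Finset.mem_insert, Finset.mem_erase, Finset.mem_sdiff, Multiset.mem_toFinset,
        K] at hx
      simp only [Finset.mem_sdiff, Multiset.mem_toFinset, Multiset.mem_cons]
      rcases hx with rfl | rfl | ⟨hx, hxM, hxF⟩
      · exact ⟨Or.inl rfl, hav'.2⟩
      · exact ⟨Or.inr (Or.inl rfl), ha'v.2⟩
      refine ⟨Or.inr (Or.inr ?_), hxF⟩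
      rcases eq_or_ne x (a, v) with rfl | hxav
      -- an allowed bad edge is repeated, so one copy of it survives the switch
      · refine (Multiset.mem_erase_of_ne hne.symm).2 (Multiset.count_pos.1 ?_)
        rw [Multiset.count_erase_self]
        have := hav_bad.resolve_left hxF
        omega
      · rw [hMR] at hxM
        simpa [hxav, hx] using hxM
    have hcard := Finset.card_le_card hsub
    rw [Finset.card_insert_of_notMem, Finset.card_insert_of_notMem] at hcard
    · have := Finset.pred_card_le_card_erase (s := K) (a := (a', v'))
      omega
    · simp [K, ha'v.1]
    · simp [K, hav'.1, ha.symm]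

theorem exists_finset_disjoint_map_fst_map_snd (A : Multiset α) (B : Multiset β)
    (hAB : Multiset.card A = Multiset.card B)
    (hS : ∀ a, A.count a ≤ ΔS) (hT : ∀ v, B.count v ≤ ΔT)
    (hFS : ∀ a, (F.filter (·.1 = a)).card ≤ C) (hFT : ∀ v, (F.filter (·.2 = v)).card ≤ C)
    (hA : 2 * ΔS * ΔT + C * (ΔS + ΔT) < Multiset.card A) :
    ∃ E : Finset (α × β), Disjoint E F ∧ E.val.map Prod.fst = A ∧ E.val.map Prod.snd = B := by
  obtain ⟨M, hMA, hMB⟩ := Multiset.exists_map_fst_eq_map_snd_eq A B hAB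
  induction hd : Multiset.card A - (M.toFinset \ F).card using Nat.strong_induction_on
    generalizing M with
  | _ d ih =>
  by_cases hgood : M.Nodup ∧ Disjoint M.toFinset F
  · refine ⟨⟨M, hgood.1⟩, ?_, hMA, hMB⟩
    simpa [Multiset.toFinset_eq hgood.1] using hgood.2
  · have hcard : Multiset.card M = Multiset.card A := by rw [← hMA, Multiset.card_map]
    obtain ⟨M', hM'A, hM'B, hlt⟩ :=
      exists_switch (hMA ▸ hS) (hMB ▸ hT) hFS hFT (hcard ▸ hA) hgood
    have hle : (M'.toFinset \ F).card ≤ Multiset.card A := by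
      calc (M'.toFinset \ F).card ≤ M'.toFinset.card := Finset.card_le_card Finset.sdiff_subset
        _ ≤ Multiset.card M' := Multiset.toFinset_card_le M'
        _ = Multiset.card A := by rw [← hMA, ← hM'A, Multiset.card_map]
    exact ih _ (by omega) M' (hM'A.trans hMA) (hM'B.trans hMB) rfl

end Switching

theorem switching_budget_lt {ℓ n m ΔS ΔT C : ℕ} (hm : 0 < m) (hm9 : 9 * m ≤ ℓ * n)
    (hS : ΔS * ℓ ≤ 2 * m) (hT : ΔT * n ≤ 2 * m) (hℓ : 72 * C ≤ ℓ) (hn : 72 * C ≤ n) :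
    2 * ΔS * ΔT + C * (ΔS + ΔT) < m := by
  have hST : 9 * (ΔS * ΔT) ≤ 4 * m := by
    refine Nat.le_of_mul_le_mul_left ?_ hm
    calc m * (9 * (ΔS * ΔT)) = 9 * m * (ΔS * ΔT) := by ring
      _ ≤ ℓ * n * (ΔS * ΔT) := Nat.mul_le_mul_right _ hm9
      _ = (ΔS * ℓ) * (ΔT * n) := by ring
      _ ≤ (2 * m) * (2 * m) := Nat.mul_le_mul hS hT
      _ = m * (4 * m) := by ring
  have hCS : 36 * (C * ΔS) ≤ m := by nlinarith
  have hCT : 36 * (C * ΔT) ≤ m := by nlinarith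
  nlinarith

theorem stmt_11_general (C : ℝ) :
    ∃ n₀ : ℕ, ∀ ℓ n : ℕ, n₀ ≤ ℓ → n₀ ≤ n →
      ∀ (s : Fin ℓ → ℕ) (t : Fin n → ℕ) (F : Finset (Fin ℓ × Fin n)) (m : ℕ),
        (∀ a, 1 ≤ s a) → (∀ v, 1 ≤ t v) →
        (∑ a, s a) = m → (∑ v, t v) = m →
        (∀ a : Fin ℓ, ((F.filter (fun p => p.1 = a)).card : ℝ) ≤ C) →
        (∀ v : Fin n, ((F.filter (fun p => p.2 = v)).card : ℝ) ≤ C) →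
        ((m : ℝ) ≤ (ℓ : ℝ) * (n : ℝ) / 9) →
        (((Finset.univ.sup s : ℕ) : ℝ) ≤ 2 * ((m : ℝ) / (ℓ : ℝ))) →
        (((Finset.univ.sup t : ℕ) : ℝ) ≤ 2 * ((m : ℝ) / (n : ℝ))) →
        ∃ E : Finset (Fin ℓ × Fin n),
          (∀ p ∈ E, p ∉ F) ∧
          (∀ a : Fin ℓ, (E.filter (fun p => p.1 = a)).card = s a) ∧
          (∀ v : Fin n, (E.filter (fun p => p.2 = v)).card = t v) := by
  refine ⟨72 * ⌊C⌋₊ + 1, fun ℓ n hℓ hn s t F m hs _ hsm htm hFS hFT hm9 hΔS hΔT => ?_⟩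
  have hℓ0 : (0 : ℝ) < ℓ := by exact_mod_cast (by omega : 0 < ℓ)
  have hn0 : (0 : ℝ) < n := by exact_mod_cast (by omega : 0 < n)
  have hm : 0 < m := hsm ▸ Finset.sum_pos (fun a _ => hs a) ⟨⟨0, by omega⟩, Finset.mem_univ _⟩
  have hΔSℓ : Finset.univ.sup s * ℓ ≤ 2 * m := by
    rw [← mul_div_assoc, le_div_iff₀ hℓ0] at hΔS; exact_mod_cast hΔS
  have hΔTn : Finset.univ.sup t * n ≤ 2 * m := by
    rw [← mul_div_assoc, le_div_iff₀ hn0] at hΔT; exact_mod_cast hΔT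
  have hm9' : 9 * m ≤ ℓ * n := by exact_mod_cast (by linarith : (9 : ℝ) * m ≤ ℓ * n)
  obtain ⟨E, hEF, hES, hET⟩ := exists_finset_disjoint_map_fst_map_snd
    (∑ a, Multiset.replicate (s a) a) (∑ v, Multiset.replicate (t v) v)
    (by rw [Multiset.card_sum_replicate, Multiset.card_sum_replicate, hsm, htm])
    (fun a => (Multiset.count_sum_replicate s a).trans_le (Finset.le_sup (Finset.mem_univ a)))
    (fun v => (Multiset.count_sum_replicate t v).trans_le (Finset.le_sup (Finset.mem_univ v)))
    (fun a => Nat.le_floor (hFS a)) (fun v => Nat.le_floor (hFT v))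
    (by rw [Multiset.card_sum_replicate, hsm]
        exact switching_budget_lt hm hm9' hΔSℓ hΔTn (by omega) (by omega))
  refine ⟨E, fun p hp hpF => Finset.disjoint_left.1 hEF hp hpF, fun a => ?_, fun v => ?_⟩
  · rw [Finset.card_filter_eq_count_map, hES, Multiset.count_sum_replicate]
  · rw [Finset.card_filter_eq_count_map, hET, Multiset.count_sum_replicate]

/-- Realisability of a bipartite degree sequence avoiding a bounded set of forbidden
edges, case (a): `m ≤ ℓn/9`, `Δ_S ≤ 2s̄`, `Δ_T ≤ 2t̄`. -/
theorem stmt_11 (C : ℝ) (hC : 1 ≤ C) :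
    ∃ n₀ : ℕ, ∀ ℓ n : ℕ, n₀ ≤ ℓ → n₀ ≤ n →
      ∀ (s : Fin ℓ → ℕ) (t : Fin n → ℕ) (F : Finset (Fin ℓ × Fin n)) (m : ℕ),
        (∀ a, 1 ≤ s a) → (∀ v, 1 ≤ t v) →
        (∑ a, s a) = m → (∑ v, t v) = m →
        (∀ a : Fin ℓ, ((F.filter (fun p => p.1 = a)).card : ℝ) ≤ C) →
        (∀ v : Fin n, ((F.filter (fun p => p.2 = v)).card : ℝ) ≤ C) →
        ((m : ℝ) ≤ (ℓ : ℝ) * (n : ℝ) / 9) →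
        (((Finset.univ.sup s : ℕ) : ℝ) ≤ 2 * ((m : ℝ) / (ℓ : ℝ))) →
        (((Finset.univ.sup t : ℕ) : ℝ) ≤ 2 * ((m : ℝ) / (n : ℝ))) →
        ∃ E : Finset (Fin ℓ × Fin n),
          (∀ p ∈ E, p ∉ F) ∧
          (∀ a : Fin ℓ, (E.filter (fun p => p.1 = a)).card = s a) ∧
          (∀ v : Fin n, (E.filter (fun p => p.2 = v)).card = t v) :=
  stmt_11_general C
end

section
/- For every constant C≥1 there exists n₀ such that the following holds whenever ℓ,n≥n₀. Let s_a≥1 (a∈S) and t_v≥1 (v∈T) be integers with m := ∑_{a∈S}s_a = ∑_{v∈T}t_v, and let F⊆{av: a∈S, v∈T} be a set of forbidden pairs such that no element of S∪T lies in more than C pairs of F. Set Δ_S=max_{a∈S}s_a and Δ_T=max_{v∈T}t_v. If Δ_S ≤ √m/2 − C and Δ_T ≤ √m/2 − C, then there exists a simple bipartite graph with bipartition (S,T) in which every a∈S has degree s_a and every v∈T has degree t_v, and which contains no edge in F. -/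
/-!
Take a largest partial realisation `E`: a graph avoiding `F` with degrees at most `s` on `S`
and `t` on `T`. If it is not a realisation, pick unsaturated `a ∈ S` and `v ∈ T`, and let `Y`
and `X` be the neighbourhoods of `a` and `v` in `E ∪ F`, so `|Y| ≤ C + Δ_S` and
`|X| ≤ C + Δ_T`. Either `a` can be joined to an unsaturated vertex outside `Y`, or some edge
`xy ∈ E` with `y ∉ Y`, `x ∉ X` can be switched to the two edges `ay`, `xv`; both enlarge `E`.
If neither is possible, every unsaturated vertex of `T` lies in `Y` and every edge of `E`
meets `Y` or `X`, whence `m ≤ 2|Y|Δ_T + |X|Δ_S ≤ 3(√m/2)(√m/2 - C) < m`.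
-/

open Finset

section Fibres

variable {ι γ : Type*} [DecidableEq γ] (f : ι → γ) (c : γ)

lemma card_eq_sum_card_filter [Fintype γ] (E : Finset ι) : #E = ∑ b, #{p ∈ E | f p = b} :=
  card_eq_sum_card_fiberwise fun p _ => mem_coe.2 (mem_univ (f p))

lemma card_filter_insert_of_notMem [DecidableEq ι] {E : Finset ι} {q : ι} (hq : q ∉ E) :
    #{p ∈ insert q E | f p = c} = #{p ∈ E | f p = c} + if f q = c then 1 else 0 := by
  rw [filter_insert]
  split_ifs
  · exact card_insert_of_notMem fun h => hq (mem_filter.1 h).1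
  · rfl

lemma card_filter_erase_add_of_mem [DecidableEq ι] {E : Finset ι} {q : ι} (hq : q ∈ E) :
    #{p ∈ E.erase q | f p = c} + (if f q = c then 1 else 0) = #{p ∈ E | f p = c} := by
  rw [filter_erase]
  split_ifs with h
  · exact card_erase_add_one (mem_filter.2 ⟨hq, h⟩)
  · rw [erase_eq_of_notMem (s := {p ∈ E | f p = c}) fun h' => h (mem_filter.1 h').2, add_zero]

lemma card_filter_insert_erase [DecidableEq ι] {E : Finset ι} {q q' : ι} (hq : q ∈ E)
    (hq' : q' ∉ E) :
    #{p ∈ insert q' (E.erase q) | f p = c} + (if f q = c then 1 else 0) =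
      #{p ∈ E | f p = c} + if f q' = c then 1 else 0 := by
  rw [card_filter_insert_of_notMem f c fun h => hq' (mem_of_mem_erase h), add_right_comm,
    card_filter_erase_add_of_mem f c hq]

lemma card_image_filter_union_le [DecidableEq ι] {δ : Type*} [DecidableEq δ] (g : ι → δ)
    (E F : Finset ι) :
    #({p ∈ E ∪ F | f p = c}.image g) ≤ #{p ∈ E | f p = c} + #{p ∈ F | f p = c} :=
  card_image_le.trans (filter_union (f · = c) E F ▸ card_union_le _ _)

lemma card_filter_mem_le {E : Finset ι} {Y : Finset γ} {Δ : ℕ}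
    (h : ∀ c ∈ Y, #{p ∈ E | f p = c} ≤ Δ) : #{p ∈ E | f p ∈ Y} ≤ #Y * Δ := by
  rw [mul_comm]
  refine card_le_mul_card_image_of_maps_to (fun p hp => (mem_filter.1 hp).2) Δ fun c hc => ?_
  exact (card_le_card (filter_subset_filter _ (filter_subset _ _))).trans (h c hc)

end Fibres

lemma sum_le_sum_add_card_mul {κ : Type*} [Fintype κ] [DecidableEq κ] {d t : κ → ℕ}
    {Y : Finset κ} {Δ : ℕ} (hY : ∀ w ∉ Y, t w ≤ d w) (ht : ∀ w, t w ≤ Δ) :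
    ∑ w, t w ≤ ∑ w, d w + #Y * Δ :=
  calc ∑ w, t w ≤ ∑ w, (d w + if w ∈ Y then Δ else 0) := sum_le_sum fun w _ => by
        split_ifs with h
        · exact (ht w).trans (Nat.le_add_left _ _)
        · exact hY w h
    _ = ∑ w, d w + #Y * Δ := by
      rw [sum_add_distrib, sum_ite_mem, univ_inter, sum_const, smul_eq_mul]

lemma two_mul_add_lt_of_le_sqrt {m c ΔS ΔT : ℕ} {C : ℝ} (hC : 0 < C) (hc : (c : ℝ) ≤ C)
    (hS : (ΔS : ℝ) ≤ √m / 2 - C) (hT : (ΔT : ℝ) ≤ √m / 2 - C) :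
    2 * (c + ΔS) * ΔT + (c + ΔT) * ΔS < m := by
  set q := √(m : ℝ) / 2 with hq
  have hqq : q * q * 4 = m := by
    rw [hq, show √(m : ℝ) / 2 * (√m / 2) * 4 = √m * √m by ring]
    exact Real.mul_self_sqrt (Nat.cast_nonneg m)
  have hq0 : 0 < q := by linarith [(Nat.cast_nonneg ΔS : (0 : ℝ) ≤ ΔS)]
  have hST : ((c : ℝ) + ΔS) * ΔT ≤ q * (q - C) :=
    mul_le_mul (by linarith) hT (Nat.cast_nonneg _) hq0.le
  have hTS : ((c : ℝ) + ΔT) * ΔS ≤ q * (q - C) :=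
    mul_le_mul (by linarith) hS (Nat.cast_nonneg _) hq0.le
  have : (2 * (c + ΔS) * ΔT + (c + ΔT) * ΔS : ℝ) < m := by nlinarith
  exact_mod_cast this

section Realization

variable {α β : Type*} [DecidableEq α] [DecidableEq β]

def IsPartialRealization (F : Finset (α × β)) (s : α → ℕ) (t : β → ℕ)
    (E : Finset (α × β)) : Prop :=
  Disjoint E F ∧ (∀ a, #{p ∈ E | p.1 = a} ≤ s a) ∧ ∀ v, #{p ∈ E | p.2 = v} ≤ t v

namespace IsPartialRealization

variable {F : Finset (α × β)} {s : α → ℕ} {t : β → ℕ} {E : Finset (α × β)}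

lemma insert_of_lt (hE : IsPartialRealization F s t E) {a : α} {w : β} (hawE : (a, w) ∉ E)
    (hawF : (a, w) ∉ F) (ha : #{p ∈ E | p.1 = a} < s a) (hw : #{p ∈ E | p.2 = w} < t w) :
    IsPartialRealization F s t (insert (a, w) E) := by
  obtain ⟨hEF, hs, ht⟩ := hE
  refine ⟨disjoint_insert_left.2 ⟨hawF, hEF⟩, fun b => ?_, fun u => ?_⟩
  · rw [card_filter_insert_of_notMem Prod.fst b hawE]
    split_ifs with h
    · exact (h : a = b) ▸ ha
    · exact hs b
  · rw [card_filter_insert_of_notMem Prod.snd u hawE]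
    split_ifs with h
    · exact (h : w = u) ▸ hw
    · exact ht u

lemma insert_erase (hE : IsPartialRealization F s t E) {x : α} {v y : β} (hxy : (x, y) ∈ E)
    (hxvE : (x, v) ∉ E) (hxvF : (x, v) ∉ F) (hv : #{p ∈ E | p.2 = v} < t v) :
    IsPartialRealization F s t (insert (x, v) (E.erase (x, y))) := by
  obtain ⟨hEF, hs, ht⟩ := hE
  refine ⟨disjoint_insert_left.2 ⟨hxvF, hEF.mono_left (erase_subset _ _)⟩, fun b => ?_,
    fun u => ?_⟩
  · have := card_filter_insert_erase Prod.fst b hxy hxvE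
    simp only [add_left_inj] at this
    exact this ▸ hs b
  · have h := card_filter_insert_erase Prod.snd u hxy hxvE
    dsimp only at h
    by_cases hvu : v = u
    · subst hvu
      simp only [↓reduceIte] at h
      omega
    · simp only [hvu, ↓reduceIte, add_zero] at h
      have := ht u
      omega

lemma exists_switch (hE : IsPartialRealization F s t E) {a x : α} {v y : β} (hxy : (x, y) ∈ E)
    (hayE : (a, y) ∉ E) (hayF : (a, y) ∉ F) (hxvE : (x, v) ∉ E) (hxvF : (x, v) ∉ F)
    (ha : #{p ∈ E | p.1 = a} < s a) (hv : #{p ∈ E | p.2 = v} < t v) :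
    ∃ E', IsPartialRealization F s t E' ∧ #E' = #E + 1 := by
  have hvy : v ≠ y := by rintro rfl; exact hxvE hxy
  set E₁ := insert (x, v) (E.erase (x, y))
  have hayE₁ : (a, y) ∉ E₁ := by
    simp only [E₁, mem_insert, Prod.mk.injEq, mem_erase, not_or]
    exact ⟨fun h => hvy h.2.symm, fun h => hayE h.2⟩
  have hdeg_a : #{p ∈ E₁ | p.1 = a} = #{p ∈ E | p.1 = a} := by
    simpa only [add_left_inj] using card_filter_insert_erase Prod.fst a hxy hxvE
  have hdeg_y : #{p ∈ E₁ | p.2 = y} + 1 = #{p ∈ E | p.2 = y} := by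
    simpa only [↓reduceIte, hvy, add_zero] using card_filter_insert_erase Prod.snd y hxy hxvE
  refine ⟨_, (hE.insert_erase hxy hxvE hxvF hv).insert_of_lt hayE₁ hayF (hdeg_a ▸ ha) ?_,
    ?_⟩
  · linarith [hE.2.2 y]
  · rw [card_insert_of_notMem hayE₁, card_insert_of_notMem fun h => hxvE (mem_of_mem_erase h),
      card_erase_add_one hxy]

lemma mem_union_of_maximal (hE : IsPartialRealization F s t E)
    (hmax : ∀ E', IsPartialRealization F s t E' → #E' ≤ #E) {a : α} {w : β}
    (ha : #{p ∈ E | p.1 = a} < s a) (hw : #{p ∈ E | p.2 = w} < t w) : (a, w) ∈ E ∪ F := by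
  by_contra haw
  rw [mem_union, not_or] at haw
  have := hmax _ (hE.insert_of_lt haw.1 haw.2 ha hw)
  rw [card_insert_of_notMem haw.1] at this
  omega

lemma mem_union_or_mem_union_of_maximal (hE : IsPartialRealization F s t E)
    (hmax : ∀ E', IsPartialRealization F s t E' → #E' ≤ #E)
    {a x : α} {v y : β} (ha : #{p ∈ E | p.1 = a} < s a) (hv : #{p ∈ E | p.2 = v} < t v)
    (hxy : (x, y) ∈ E) : (a, y) ∈ E ∪ F ∨ (x, v) ∈ E ∪ F := by
  by_contra! h
  simp only [mem_union, not_or] at h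
  obtain ⟨E', hE', hcard⟩ := hE.exists_switch hxy h.1.1 h.1.2 h.2.1 h.2.2 ha hv
  have := hmax E' hE'
  omega

lemma sum_le_card_of_maximal [Fintype α] [Fintype β] (hE : IsPartialRealization F s t E)
    (hmax : ∀ E', IsPartialRealization F s t E' → #E' ≤ #E)
    {c ΔS ΔT : ℕ} (hst : ∑ a, s a = ∑ v, t v) (hFS : ∀ a, #{p ∈ F | p.1 = a} ≤ c)
    (hFT : ∀ v, #{p ∈ F | p.2 = v} ≤ c) (hS : ∀ a, s a ≤ ΔS) (hT : ∀ v, t v ≤ ΔT)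
    (hm : 2 * (c + ΔS) * ΔT + (c + ΔT) * ΔS < ∑ a, s a) : ∑ a, s a ≤ #E := by
  by_contra! hEs
  obtain ⟨a, -, ha⟩ : ∃ a ∈ univ, #{p ∈ E | p.1 = a} < s a :=
    exists_lt_of_sum_lt (card_eq_sum_card_filter Prod.fst E ▸ hEs)
  obtain ⟨v, -, hv⟩ : ∃ v ∈ univ, #{p ∈ E | p.2 = v} < t v :=
    exists_lt_of_sum_lt (card_eq_sum_card_filter Prod.snd E ▸ hst ▸ hEs)
  set Y := {p ∈ E ∪ F | p.1 = a}.image Prod.snd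
  set X := {p ∈ E ∪ F | p.2 = v}.image Prod.fst
  have hY : #Y ≤ c + ΔS := by
    linarith [card_image_filter_union_le Prod.fst a Prod.snd E F, hE.2.1 a, hFS a, hS a]
  have hX : #X ≤ c + ΔT := by
    linarith [card_image_filter_union_le Prod.snd v Prod.fst E F, hE.2.2 v, hFT v, hT v]
  have hmemY : ∀ w, (a, w) ∈ E ∪ F → w ∈ Y := fun w h =>
    mem_image.2 ⟨(a, w), mem_filter.2 ⟨h, rfl⟩, rfl⟩
  have hmemX : ∀ x, (x, v) ∈ E ∪ F → x ∈ X := fun x h =>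
    mem_image.2 ⟨(x, v), mem_filter.2 ⟨h, rfl⟩, rfl⟩
  have hT_le : ∑ w, t w ≤ #E + #Y * ΔT := by
    rw [card_eq_sum_card_filter Prod.snd E]
    refine sum_le_sum_add_card_mul (fun w hwY => ?_) hT
    exact not_lt.1 fun hw => hwY (hmemY w (hE.mem_union_of_maximal hmax ha hw))
  have hcover : E ⊆ {p ∈ E | p.2 ∈ Y} ∪ {p ∈ E | p.1 ∈ X} := by
    rintro ⟨x, y⟩ hxy
    rcases hE.mem_union_or_mem_union_of_maximal hmax ha hv hxy with hay | hxv
    · exact mem_union_left _ (mem_filter.2 ⟨hxy, hmemY y hay⟩)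
    · exact mem_union_right _ (mem_filter.2 ⟨hxy, hmemX x hxv⟩)
  have hEY : #{p ∈ E | p.2 ∈ Y} ≤ #Y * ΔT :=
    card_filter_mem_le Prod.snd fun y _ => (hE.2.2 y).trans (hT y)
  have hEX : #{p ∈ E | p.1 ∈ X} ≤ #X * ΔS :=
    card_filter_mem_le Prod.fst fun x _ => (hE.2.1 x).trans (hS x)
  have hE_le := (card_le_card hcover).trans (card_union_le _ _)
  have hYT := Nat.mul_le_mul_right ΔT hY
  have hXS := Nat.mul_le_mul_right ΔS hX
  linarith

end IsPartialRealization

theorem exists_realization [Fintype α] [Fintype β] {F : Finset (α × β)} {s : α → ℕ}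
    {t : β → ℕ} {c ΔS ΔT : ℕ} (hst : ∑ a, s a = ∑ v, t v)
    (hFS : ∀ a, #{p ∈ F | p.1 = a} ≤ c) (hFT : ∀ v, #{p ∈ F | p.2 = v} ≤ c)
    (hS : ∀ a, s a ≤ ΔS) (hT : ∀ v, t v ≤ ΔT)
    (hm : 2 * (c + ΔS) * ΔT + (c + ΔT) * ΔS < ∑ a, s a) :
    ∃ E : Finset (α × β), Disjoint E F ∧ (∀ a, #{p ∈ E | p.1 = a} = s a) ∧
      ∀ v, #{p ∈ E | p.2 = v} = t v := by
  classical
  obtain ⟨E, hE, hmax⟩ := exists_max_image {E | IsPartialRealization F s t E} card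
    ⟨∅, mem_filter.2 ⟨mem_univ _, by simp [IsPartialRealization]⟩⟩
  simp only [mem_filter, mem_univ, true_and] at hE hmax
  have hdeg_s : ∑ a, #{p ∈ E | p.1 = a} = ∑ a, s a :=
    le_antisymm (sum_le_sum fun a _ => hE.2.1 a) (card_eq_sum_card_filter Prod.fst E ▸
      hE.sum_le_card_of_maximal hmax hst hFS hFT hS hT hm)
  have hdeg_t : ∑ v, #{p ∈ E | p.2 = v} = ∑ v, t v := by
    rw [← card_eq_sum_card_filter, card_eq_sum_card_filter Prod.fst, hdeg_s, hst]
  exact ⟨E, hE.1, fun a => (sum_eq_sum_iff_of_le fun a _ => hE.2.1 a).1 hdeg_s a (mem_univ a),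
    fun v => (sum_eq_sum_iff_of_le fun v _ => hE.2.2 v).1 hdeg_t v (mem_univ v)⟩

end Realization

/-- Realisability of a bipartite degree sequence avoiding a bounded set of forbidden
edges, case (b): `Δ_S, Δ_T ≤ √m/2 - C`. -/
theorem stmt_12 (C : ℝ) (hC : 1 ≤ C) :
    ∃ n₀ : ℕ, ∀ ℓ n : ℕ, n₀ ≤ ℓ → n₀ ≤ n →
      ∀ (s : Fin ℓ → ℕ) (t : Fin n → ℕ) (F : Finset (Fin ℓ × Fin n)) (m : ℕ),
        (∀ a, 1 ≤ s a) → (∀ v, 1 ≤ t v) →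
        (∑ a, s a) = m → (∑ v, t v) = m →
        (∀ a : Fin ℓ, ((F.filter (fun p => p.1 = a)).card : ℝ) ≤ C) →
        (∀ v : Fin n, ((F.filter (fun p => p.2 = v)).card : ℝ) ≤ C) →
        (((Finset.univ.sup s : ℕ) : ℝ) ≤ Real.sqrt m / 2 - C) →
        (((Finset.univ.sup t : ℕ) : ℝ) ≤ Real.sqrt m / 2 - C) →
        ∃ E : Finset (Fin ℓ × Fin n),
          (∀ p ∈ E, p ∉ F) ∧
          (∀ a : Fin ℓ, (E.filter (fun p => p.1 = a)).card = s a) ∧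
          (∀ v : Fin n, (E.filter (fun p => p.2 = v)).card = t v) := by
  refine ⟨0, fun ℓ n _ _ s t F m _ _ hsm htm hFS hFT hS hT => ?_⟩
  subst hsm
  obtain ⟨E, hEF, hEs, hEt⟩ := exists_realization (c := ⌊C⌋₊) htm.symm
    (fun a => Nat.le_floor (hFS a)) (fun v => Nat.le_floor (hFT v))
    (fun a => le_sup (mem_univ a)) (fun v => le_sup (mem_univ v))
    (two_mul_add_lt_of_le_sqrt (by linarith) (Nat.floor_le (by linarith)) hS hT)
  exact ⟨E, fun p hpE hpF => disjoint_left.1 hEF hpE hpF, hEs, hEt⟩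
end

section
/- Let N be a positive integer, V=[N], A⊆{unordered pairs of V}, and d a nonnegative integer sequence of length N. Let a,v,b be distinct elements of V with av,bv∈A. If d−e_a−e_v is A-realisable and P_{av}(d−e_a−e_v) ≠ 1, and N(d)>0, then Y_{avb}(d) = P_{av}(d) · ( P_{bv}(d−e_a−e_v) − Y_{avb}(d−e_a−e_v) ) / ( 1 − P_{av}(d−e_a−e_v) ). -/
open scoped Classical

/-- Degree of vertex `i` in the edge set `E`. -/
noncomputable def degC {N : ℕ} (E : Finset (Sym2 (Fin N))) (i : Fin N) : ℕ :=
  (E.filter (fun e => i ∈ e)).card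

/-- `N(d)`: the number of simple graphs on `[N]` with all edges in the allowable set `A`
realising the (integer) degree sequence `d`. -/
noncomputable def Ncnt (N : ℕ) (A : Set (Sym2 (Fin N))) (d : Fin N → ℤ) : ℕ :=
  Nat.card {E : Finset (Sym2 (Fin N)) //
    ↑E ⊆ A ∧ (∀ e ∈ E, ¬ e.IsDiag) ∧ ∀ i, (degC E i : ℤ) = d i}

/-- `N_F(d)`: the number of such graphs whose edge set contains `F`. -/
noncomputable def NcntF (N : ℕ) (A : Set (Sym2 (Fin N))) (F : Finset (Sym2 (Fin N)))
    (d : Fin N → ℤ) : ℕ :=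
  Nat.card {E : Finset (Sym2 (Fin N)) //
    F ⊆ E ∧ ↑E ⊆ A ∧ (∀ e ∈ E, ¬ e.IsDiag) ∧ ∀ i, (degC E i : ℤ) = d i}

/-- `P_{av}(d) = N_{av}(d)/N(d)`. -/
noncomputable def Pedge (N : ℕ) (A : Set (Sym2 (Fin N))) (a v : Fin N) (d : Fin N → ℤ) : ℝ :=
  (NcntF N A {s(a, v)} d : ℝ) / (Ncnt N A d : ℝ)

/-- The elementary unit vector `e_i`. -/
def unitV {N : ℕ} (i : Fin N) : Fin N → ℤ := fun j => if j = i then 1 else 0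

/-- `R_{ab}(d) = N(d - e_a)/N(d - e_b)`. -/
noncomputable def Rrat (N : ℕ) (A : Set (Sym2 (Fin N))) (a b : Fin N) (d : Fin N → ℤ) : ℝ :=
  (Ncnt N A (d - unitV a) : ℝ) / (Ncnt N A (d - unitV b) : ℝ)

/-- `Y_{avb}(d) = P_{{av,bv}}(d)`, the probability of the 2-path `avb`. -/
noncomputable def Ypath (N : ℕ) (A : Set (Sym2 (Fin N))) (a v b : Fin N) (d : Fin N → ℤ) : ℝ :=
  (NcntF N A {s(a, v), s(b, v)} d : ℝ) / (Ncnt N A d : ℝ)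

/-
Deleting the edge `av` is a bijection from the graphs of degree sequence `d` containing `av`
onto the graphs of degree sequence `d' = d - e_a - e_v` avoiding `av`. Hence for any edge set `F`
not containing `av`,
  `N_{F ∪ av}(d) + N_{F ∪ av}(d') = N_F(d')`.
With `F = ∅` and `F = {bv}` this gives `N_{av}(d) = N(d') - N_{av}(d')` and
`N_{av,bv}(d) = N_{bv}(d') - N_{av,bv}(d')`, and the recursion for `Y_{avb}(d)` is the quotient
of these two identities.
-/

def Realises {N : ℕ} (A : Set (Sym2 (Fin N))) (d : Fin N → ℤ) (E : Finset (Sym2 (Fin N))) :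
    Prop :=
  ↑E ⊆ A ∧ (∀ e ∈ E, ¬ e.IsDiag) ∧ ∀ i, (degC E i : ℤ) = d i

open Finset

lemma NcntF_eq_card (N : ℕ) (A : Set (Sym2 (Fin N))) (F : Finset (Sym2 (Fin N)))
    (d : Fin N → ℤ) : NcntF N A F d = #{E | F ⊆ E ∧ Realises A d E} := by
  rw [NcntF, Nat.card_eq_fintype_card, Fintype.card_subtype]
  convert rfl using 3 with E
  rfl

lemma Ncnt_eq_NcntF_empty (N : ℕ) (A : Set (Sym2 (Fin N))) (d : Fin N → ℤ) :
    Ncnt N A d = NcntF N A ∅ d := by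
  simp [Ncnt, NcntF]

lemma degC_insert {N : ℕ} {s : Sym2 (Fin N)} {E : Finset (Sym2 (Fin N))} (hs : s ∉ E)
    (i : Fin N) : degC (insert s E) i = degC E i + if i ∈ s then 1 else 0 := by
  unfold degC
  rw [filter_insert]
  split_ifs with hi
  · exact card_insert_of_notMem fun h => hs (mem_filter.mp h).1
  · rfl

lemma realises_insert_iff {N : ℕ} {A : Set (Sym2 (Fin N))} {d : Fin N → ℤ} {a v : Fin N}
    {E : Finset (Sym2 (Fin N))} (hav : a ≠ v) (hA : s(a, v) ∈ A) (hE : s(a, v) ∉ E) :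
    Realises A d (insert s(a, v) E) ↔ Realises A (d - unitV a - unitV v) E := by
  have hdeg : ∀ i, (degC (insert s(a, v) E) i : ℤ) = d i ↔
      (degC E i : ℤ) = (d - unitV a - unitV v) i := by
    intro i
    rw [degC_insert hE]
    by_cases hia : i = a <;> by_cases hiv : i = v <;> simp_all [unitV] <;> omega
  simp only [Realises, coe_insert, Set.insert_subset_iff, forall_mem_insert, forall_congr' hdeg]
  simp [hA, hav]

lemma NcntF_insert_eq_card_notMem (N : ℕ) (A : Set (Sym2 (Fin N))) {a v : Fin N} (hav : a ≠ v)
    (hA : s(a, v) ∈ A) {F : Finset (Sym2 (Fin N))} (hF : s(a, v) ∉ F) (d : Fin N → ℤ) :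
    NcntF N A (insert s(a, v) F) d =
      #{E | (F ⊆ E ∧ Realises A (d - unitV a - unitV v) E) ∧ s(a, v) ∉ E} := by
  rw [NcntF_eq_card]
  refine card_nbij' (fun E => E.erase s(a, v)) (insert s(a, v)) ?_ ?_ ?_ ?_
  · intro E hE
    simp only [coe_filter, mem_univ, true_and, Set.mem_ofPred_eq, insert_subset_iff] at hE ⊢
    obtain ⟨⟨hsE, hFE⟩, hreal⟩ := hE
    rw [← insert_erase hsE, realises_insert_iff hav hA (notMem_erase _ _)] at hreal
    exact ⟨⟨subset_erase.mpr ⟨hFE, hF⟩, hreal⟩, notMem_erase _ _⟩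
  · intro E hE
    simp only [coe_filter, mem_univ, true_and, Set.mem_ofPred_eq] at hE ⊢
    obtain ⟨⟨hFE, hreal⟩, hsE⟩ := hE
    exact ⟨insert_subset_insert _ hFE, (realises_insert_iff hav hA hsE).mpr hreal⟩
  · intro E hE
    simp only [coe_filter, mem_univ, true_and, Set.mem_ofPred_eq, insert_subset_iff] at hE
    exact insert_erase hE.1.1
  · intro E hE
    simp only [coe_filter, mem_univ, true_and, Set.mem_ofPred_eq] at hE
    exact erase_insert hE.2

lemma NcntF_insert_add_NcntF_insert (N : ℕ) (A : Set (Sym2 (Fin N))) {a v : Fin N}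
    (hav : a ≠ v) (hA : s(a, v) ∈ A) {F : Finset (Sym2 (Fin N))} (hF : s(a, v) ∉ F)
    (d : Fin N → ℤ) :
    NcntF N A (insert s(a, v) F) d + NcntF N A (insert s(a, v) F) (d - unitV a - unitV v) =
      NcntF N A F (d - unitV a - unitV v) := by
  have hcontains : NcntF N A (insert s(a, v) F) (d - unitV a - unitV v) =
      #{E | (F ⊆ E ∧ Realises A (d - unitV a - unitV v) E) ∧ s(a, v) ∈ E} := by
    simp only [NcntF_eq_card, insert_subset_iff]
    congr 2
    ext E
    tauto
  rw [NcntF_insert_eq_card_notMem N A hav hA hF, hcontains, NcntF_eq_card, add_comm]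
  conv_rhs => rw [← card_filter_add_card_filter_not (p := fun E => s(a, v) ∈ E)]
  rw [filter_filter, filter_filter]

theorem stmt_15_general (N : ℕ) (A : Set (Sym2 (Fin N))) (d : Fin N → ℤ)
    (a v b : Fin N)
    (hab : a ≠ b) (hav : a ≠ v)
    (hA1 : s(a, v) ∈ A)
    (hrea : 0 < Ncnt N A (d - unitV a - unitV v))
    (hP : Pedge N A a v (d - unitV a - unitV v) ≠ 1) :
    Ypath N A a v b d =
      Pedge N A a v d *
        (Pedge N A b v (d - unitV a - unitV v) - Ypath N A a v b (d - unitV a - unitV v)) /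
        (1 - Pedge N A a v (d - unitV a - unitV v)) := by
  have hav_notMem : s(a, v) ∉ ({s(b, v)} : Finset (Sym2 (Fin N))) := by simp [hab, hav]
  have hedge := NcntF_insert_add_NcntF_insert N A hav hA1 (notMem_empty _) d
  have hpath := NcntF_insert_add_NcntF_insert N A hav hA1 hav_notMem d
  rw [← Ncnt_eq_NcntF_empty] at hedge
  simp only [insert_empty_eq] at hedge
  have hm : (Ncnt N A (d - unitV a - unitV v) : ℝ) ≠ 0 := by positivity
  have hmp : (Ncnt N A (d - unitV a - unitV v) : ℝ) -
      NcntF N A {s(a, v)} (d - unitV a - unitV v) ≠ 0 := by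
    rw [Pedge, ne_eq, div_eq_one_iff_eq hm] at hP
    exact sub_ne_zero.mpr (Ne.symm hP)
  unfold Ypath Pedge
  rw [← Nat.cast_inj (R := ℝ), Nat.cast_add] at hedge hpath
  rw [eq_sub_of_add_eq hedge, eq_sub_of_add_eq hpath]
  field_simp

/-- Recursive relation for the 2-path probability `Y_{avb}(d)` (Proposition 3.1(c)). -/
theorem stmt_15 (N : ℕ) (hN : 0 < N) (A : Set (Sym2 (Fin N))) (d : Fin N → ℤ)
    (hd : ∀ i, 0 ≤ d i) (a v b : Fin N)
    (hab : a ≠ b) (hav : a ≠ v) (hbv : b ≠ v)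
    (hA1 : s(a, v) ∈ A) (hA2 : s(b, v) ∈ A)
    (hrea : 0 < Ncnt N A (d - unitV a - unitV v))
    (hP : Pedge N A a v (d - unitV a - unitV v) ≠ 1)
    (hN0 : 0 < Ncnt N A d) :
    Ypath N A a v b d =
      Pedge N A a v d *
        (Pedge N A b v (d - unitV a - unitV v) - Ypath N A a v b (d - unitV a - unitV v)) /
        (1 - Pedge N A a v (d - unitV a - unitV v)) :=
  stmt_15_general N A d a v b hab hav hA1 hrea hP
end
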